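/- Let A be a unital ring and let C_n → C_{n−1} → ⋯ → C_1 → C_0 be a chain complex of finitely generated free A-modules (boundary maps ∂_i : C_i → C_{i−1} with ∂_i ∘ ∂_{i+1} = 0, and the conventions ∂_0 = 0, ∂_{n+1} = 0). Assume each homology module H_i = ker ∂_i / range ∂_{i+1} is a finitely generated free A-module. Then for every i, the module of cycles Z_i = ker ∂_i and the module of boundaries B_i = range ∂_{i+1} are stably free A-modules. -/

import Mathlib

/-!
A submodule `Q ⊆ M` whose quotient is stably free splits off, `M ≅ Q × M ⧸ Q`, since stably
free modules are projective; and stably free modules cancel from products, so `Q` is stably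
free as soon as `M` is. Going up the complex, `B_0 ⊆ C_0` has quotient `H_0`;
`Z_{i+1} ⊆ C_{i+1}` has quotient `C_{i+1} ⧸ Z_{i+1} ≅ B_i`; and `B_{i+1} ⊆ Z_{i+1}` has
quotient `H_{i+1}`.
-/

/-- An `A`-module `M` is *stably free* if `M ⊕ A^s ≅ A^t` for some natural numbers `s, t`. -/
def IsStablyFree (A : Type*) [Ring A] (M : Type*) [AddCommGroup M] [Module A M] : Prop :=
  ∃ s t : ℕ, Nonempty ((M × (Fin s → A)) ≃ₗ[A] (Fin t → A))

open LinearMap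

noncomputable def finArrowProdLinearEquiv (A : Type*) [Ring A] (s t : ℕ) :
    ((Fin s → A) × (Fin t → A)) ≃ₗ[A] (Fin (s + t) → A) :=
  (LinearEquiv.sumArrowLequivProdArrow (Fin s) (Fin t) A A).symm ≪≫ₗ
    LinearEquiv.funCongrLeft A A finSumFinEquiv.symm

namespace IsStablyFree

variable {A : Type*} [Ring A] {M N : Type*} [AddCommGroup M] [Module A M]
  [AddCommGroup N] [Module A N]

theorem of_linearEquiv (e : M ≃ₗ[A] N) (h : IsStablyFree A N) : IsStablyFree A M := by
  obtain ⟨s, t, ⟨f⟩⟩ := h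
  exact ⟨s, t, ⟨e.prodCongr (LinearEquiv.refl A _) ≪≫ₗ f⟩⟩

theorem of_free [Module.Free A M] [Module.Finite A M] : IsStablyFree A M :=
  ⟨0, Fintype.card (Module.Free.ChooseBasisIndex A M),
    ⟨LinearEquiv.prodUnique ≪≫ₗ (Module.Free.chooseBasis A M).equivFun ≪≫ₗ
      LinearEquiv.funCongrLeft A A (Fintype.equivFin _).symm⟩⟩

theorem projective (h : IsStablyFree A M) : Module.Projective A M := by
  obtain ⟨s, t, ⟨f⟩⟩ := h
  refine .of_split (M := Fin t → A) (f.toLinearMap ∘ₗ inl A M (Fin s → A))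
    (fst A M (Fin s → A) ∘ₗ f.symm.toLinearMap) ?_
  ext x
  simp

theorem prod_finArrow (h : IsStablyFree A M) (k : ℕ) : IsStablyFree A (M × (Fin k → A)) := by
  obtain ⟨s, t, ⟨f⟩⟩ := h
  exact ⟨s, t + k, ⟨LinearEquiv.prodAssoc A M _ _ ≪≫ₗ
    (LinearEquiv.refl A M).prodCongr (LinearEquiv.prodComm A _ _) ≪≫ₗ
    (LinearEquiv.prodAssoc A M _ _).symm ≪≫ₗ
    f.prodCongr (LinearEquiv.refl A _) ≪≫ₗ finArrowProdLinearEquiv A t k⟩⟩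

theorem of_prod_finArrow {k : ℕ} (h : IsStablyFree A (M × (Fin k → A))) :
    IsStablyFree A M := by
  obtain ⟨s, t, ⟨f⟩⟩ := h
  exact ⟨k + s, t,
    ⟨(LinearEquiv.refl A M).prodCongr (finArrowProdLinearEquiv A k s).symm ≪≫ₗ
    (LinearEquiv.prodAssoc A M _ _).symm ≪≫ₗ f⟩⟩

theorem of_prod_left (h : IsStablyFree A (M × N)) (hN : IsStablyFree A N) :
    IsStablyFree A M := by
  obtain ⟨u, v, ⟨g⟩⟩ := hN
  exact of_prod_finArrow (k := v) <| (h.prod_finArrow u).of_linearEquiv <|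
    (LinearEquiv.refl A M).prodCongr g.symm ≪≫ₗ (LinearEquiv.prodAssoc A M N _).symm

end IsStablyFree

namespace Submodule

variable {A : Type*} [Ring A] {M : Type*} [AddCommGroup M] [Module A M]

theorem nonempty_linearEquiv_prod_quotient (Q : Submodule A M) [Module.Projective A (M ⧸ Q)] :
    Nonempty (M ≃ₗ[A] Q × (M ⧸ Q)) := by
  obtain ⟨l, hl⟩ := Module.projective_lifting_property Q.mkQ LinearMap.id Q.mkQ_surjective
  exact ⟨((exact_subtype_mkQ Q).splitSurjectiveEquiv Q.injective_subtype ⟨l, hl⟩).1⟩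

theorem isStablyFree_of_quotient (Q : Submodule A M) (hM : IsStablyFree A M)
    (hQ : IsStablyFree A (M ⧸ Q)) : IsStablyFree A Q := by
  have := hQ.projective
  obtain ⟨e⟩ := Q.nonempty_linearEquiv_prod_quotient
  exact (hM.of_linearEquiv e.symm).of_prod_left hQ

end Submodule

theorem cycles_and_boundaries_stablyFree_general {A : Type*} [Ring A] (C : ℕ → Type*)
    [∀ i, AddCommGroup (C i)] [∀ i, Module A (C i)]
    [∀ i, Module.Free A (C i)] [∀ i, Module.Finite A (C i)]
    (d : ∀ i : ℕ, C (i + 1) →ₗ[A] C i)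
    (hdd : ∀ i, (d i) ∘ₗ (d (i + 1)) = 0)
    (hH0free : Module.Free A (C 0 ⧸ LinearMap.range (d 0)))
    (hH0fin : Module.Finite A (C 0 ⧸ LinearMap.range (d 0)))
    (hHfree : ∀ i, Module.Free A
      (↥(LinearMap.ker (d i)) ⧸
        (LinearMap.range (d (i + 1))).comap (LinearMap.ker (d i)).subtype))
    (hHfin : ∀ i, Module.Finite A
      (↥(LinearMap.ker (d i)) ⧸
        (LinearMap.range (d (i + 1))).comap (LinearMap.ker (d i)).subtype)) :
    IsStablyFree A (C 0) ∧
    (∀ i, IsStablyFree A ↥(LinearMap.ker (d i))) ∧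
    (∀ i, IsStablyFree A ↥(LinearMap.range (d i))) := by
  have hC (i : ℕ) : IsStablyFree A (C i) := .of_free
  have hZ (i : ℕ) (hB : IsStablyFree A (range (d i))) : IsStablyFree A (ker (d i)) :=
    (ker (d i)).isStablyFree_of_quotient (hC _) (hB.of_linearEquiv (d i).quotKerEquivRange)
  have hB (i : ℕ) : IsStablyFree A (range (d i)) := by
    induction i with
    | zero => exact (range (d 0)).isStablyFree_of_quotient (hC 0) .of_free
    | succ i ih =>
      have := hHfree i
      have := hHfin i
      exact .of_linearEquiv (Submodule.comapSubtypeEquivOfLe (range_le_ker_iff.mpr (hdd i))).symm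
        (Submodule.isStablyFree_of_quotient _ (hZ i ih) .of_free)
  exact ⟨hC 0, fun i => hZ i (hB i), hB⟩

/-- Let `C_n → ⋯ → C_0` be a chain complex of finitely generated free `A`-modules (we encode
it by modules `C i` for all `i : ℕ`, trivial above degree `n`, with boundary maps
`d i : C (i+1) → C i`, so that `∂_{i+1} = d i`; the conventions `∂_0 = 0`, `∂_{n+1} = 0` are
automatic).  If every homology module (`H_0 = C_0 / range ∂_1` and
`H_{i+1} = ker ∂_{i+1} / range ∂_{i+2}`) is finitely generated free, then all the cycle
modules `Z_i = ker ∂_i` (here `Z_0 = C_0` and `Z_{i+1} = ker (d i)`) and boundary modules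
`B_i = range ∂_{i+1} = range (d i)` are stably free. -/
theorem cycles_and_boundaries_stablyFree {A : Type*} [Ring A] (n : ℕ) (C : ℕ → Type*)
    [∀ i, AddCommGroup (C i)] [∀ i, Module A (C i)]
    [∀ i, Module.Free A (C i)] [∀ i, Module.Finite A (C i)]
    (hbound : ∀ i, n < i → Subsingleton (C i))
    (d : ∀ i : ℕ, C (i + 1) →ₗ[A] C i)
    (hdd : ∀ i, (d i) ∘ₗ (d (i + 1)) = 0)
    (hH0free : Module.Free A (C 0 ⧸ LinearMap.range (d 0)))
    (hH0fin : Module.Finite A (C 0 ⧸ LinearMap.range (d 0)))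
    (hHfree : ∀ i, Module.Free A
      (↥(LinearMap.ker (d i)) ⧸
        (LinearMap.range (d (i + 1))).comap (LinearMap.ker (d i)).subtype))
    (hHfin : ∀ i, Module.Finite A
      (↥(LinearMap.ker (d i)) ⧸
        (LinearMap.range (d (i + 1))).comap (LinearMap.ker (d i)).subtype)) :
    IsStablyFree A (C 0) ∧
    (∀ i, IsStablyFree A ↥(LinearMap.ker (d i))) ∧
    (∀ i, IsStablyFree A ↥(LinearMap.range (d i))) :=
  cycles_and_boundaries_stablyFree_general C d hdd hH0free hH0fin hHfree hHfin
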